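/- arXiv:math/9809195 — 5 statements merged into one kernel-verified Lean document; each statement's English description precedes it below -/
import Mathlib

section
/- The set {f_i − g_i : i ∈ D_Q} is a basis of the subspace U; in particular dim_k U = |D_Q|. (This is the abstract form of Lemma 'gamma.basis': {f_F − g_F : F ∈ Δ(Q)} is a basis of the image of I_L in Λ[K].) -/
/-! Restricting coordinates to `D_Q` gives a linear map `U → (D_Q →₀ k)`. It is injective: if a
nonzero `w ∈ U` had all its coordinates in `D_L`, its largest one, at `i ∈ D_L`, would give
`f i ∈ U + span {f j | j < i}`. It maps `f i - g i` to the `i`-th unit vector because `g i` only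
involves indices of `D_L`, hence it is also surjective, and the `f i - g i` are the preimages of
the standard basis. -/

namespace Module.Basis

section

variable {k V ι : Type*} [Field k] [AddCommGroup V] [Module k V] (f : Basis ι k V)
  (U : Submodule k V)

theorem repr_eq_zero_of_mem_span_image {s : Set ι} {x : V} (hx : x ∈ Submodule.span k (f '' s))
    {j : ι} (hj : j ∉ s) : f.repr x j = 0 :=
  Finsupp.notMem_support_iff.mp fun h => hj (f.mem_span_image.mp hx h)

noncomputable def coordsOn (S : Set ι) : U →ₗ[k] S →₀ k :=
  Finsupp.lcomapDomain ((↑) : S → ι) Subtype.val_injective ∘ₗ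
    f.repr.toLinearMap ∘ₗ U.subtype

@[simp]
theorem coordsOn_apply (S : Set ι) (u : U) (j : S) : f.coordsOn U S u j = f.repr u j := rfl

end

variable {k V ι : Type*} [Field k] [AddCommGroup V] [Module k V] [LinearOrder ι]
  (f : Basis ι k V) (U : Submodule k V)

theorem mem_sup_span_lt_of_isGreatest_support {w : V} (hw : w ∈ U) {i : ι}
    (hi : IsGreatest ↑(f.repr w).support i) :
    f i ∈ U ⊔ Submodule.span k (f '' {j | j < i}) := by
  have hlower : w - f.repr w i • f i ∈ Submodule.span k (f '' {j | j < i}) := by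
    rw [f.mem_span_image]
    intro j hj
    rcases eq_or_ne j i with rfl | hji
    · simp at hj
    · simp only [Finset.mem_coe, Finsupp.mem_support_iff, map_sub, map_smul, repr_self,
        Finsupp.coe_sub, Finsupp.coe_smul, Pi.sub_apply, Pi.smul_apply,
        Finsupp.single_eq_of_ne hji, smul_zero, sub_zero] at hj
      exact (hi.2 (Finsupp.mem_support_iff.mpr hj)).lt_of_ne hji
  have hfi : f i = (f.repr w i)⁻¹ • (w - (w - f.repr w i • f i)) := by
    rw [sub_sub_cancel, smul_smul, inv_mul_cancel₀ (Finsupp.mem_support_iff.mp hi.1), one_smul]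
  rw [hfi]
  exact Submodule.smul_mem _ _
    (sub_mem (Submodule.mem_sup_left hw) (Submodule.mem_sup_right hlower))

theorem eq_zero_of_mem_of_support_subset {w : V} (hw : w ∈ U)
    (hsupp : ↑(f.repr w).support ⊆ {i | f i ∉ U ⊔ Submodule.span k (f '' {j | j < i})}) :
    w = 0 := by
  by_contra hne
  have hsupp_ne : (f.repr w).support.Nonempty := by simpa using hne
  have hmax := Finset.isGreatest_max' _ hsupp_ne
  exact hsupp hmax.1 (f.mem_sup_span_lt_of_isGreatest_support U hw hmax)

variable {f U} {S : Set ι}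

theorem coordsOn_injective
    (hS : ∀ i ∉ S, f i ∉ U ⊔ Submodule.span k (f '' {j | j < i})) :
    Function.Injective (f.coordsOn U S) := by
  rw [← LinearMap.ker_eq_bot, LinearMap.ker_eq_bot']
  intro u hu
  refine Subtype.ext (f.eq_zero_of_mem_of_support_subset U u.2 fun i hi => hS i fun hiS => ?_)
  exact Finsupp.mem_support_iff.mp hi (DFunLike.congr_fun hu ⟨i, hiS⟩)

variable {v : S → U}

theorem coordsOn_eq_single
    (hv : ∀ i : S, ∀ j ∈ S, f.repr (v i) j = Finsupp.single (i : ι) 1 j) (i : S) :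
    f.coordsOn U S (v i) = Finsupp.single i 1 := by
  ext j
  simp [hv i j j.2, Finsupp.single_apply, Subtype.ext_iff]

theorem coordsOn_surjective
    (hv : ∀ i : S, ∀ j ∈ S, f.repr (v i) j = Finsupp.single (i : ι) 1 j) :
    Function.Surjective (f.coordsOn U S) := by
  rw [← LinearMap.range_eq_top, eq_top_iff, ← Finsupp.basisSingleOne.span_eq, Submodule.span_le]
  rintro _ ⟨i, rfl⟩
  exact ⟨v i, by simpa using coordsOn_eq_single hv i⟩

noncomputable def basisOfCoords
    (hv : ∀ i : S, ∀ j ∈ S, f.repr (v i) j = Finsupp.single (i : ι) 1 j)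
    (hS : ∀ i ∉ S, f i ∉ U ⊔ Submodule.span k (f '' {j | j < i})) : Basis S k U :=
  Finsupp.basisSingleOne.map
    (LinearEquiv.ofBijective _ ⟨coordsOn_injective hS, coordsOn_surjective hv⟩).symm

@[simp]
theorem basisOfCoords_apply
    (hv : ∀ i : S, ∀ j ∈ S, f.repr (v i) j = Finsupp.single (i : ι) 1 j)
    (hS : ∀ i ∉ S, f i ∉ U ⊔ Submodule.span k (f '' {j | j < i})) (i : S) :
    basisOfCoords hv hS i = v i := by
  rw [basisOfCoords, Basis.map_apply, LinearEquiv.symm_apply_eq]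
  exact (coordsOn_eq_single hv i).symm

end Module.Basis

theorem gamma_basis_general {k V ι : Type*} [Field k] [AddCommGroup V] [Module k V]
    [LinearOrder ι]
    (f : Module.Basis ι k V) (U : Submodule k V)
    (DL DQ : Set ι)
    (hDL : DL = {i : ι | f i ∉ U ⊔ Submodule.span k (f '' {j : ι | j < i})})
    (hDQ : DQ = DLᶜ)
    (g : ι → V)
    (hg : ∀ i ∈ DQ, g i ∈ Submodule.span k (f '' {j : ι | j ∈ DL ∧ j < i}) ∧ f i - g i ∈ U) :
    LinearIndependent k (fun i : DQ => f i - g i) ∧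
    Submodule.span k ((fun i : ι => f i - g i) '' DQ) = U ∧
    Module.finrank k U = DQ.ncard := by
  have hcoords : ∀ i : DQ, ∀ j ∈ DQ, f.repr (f i - g i) j = Finsupp.single (i : ι) 1 j := by
    intro i j hj
    have hgj : f.repr (g i) j = 0 :=
      f.repr_eq_zero_of_mem_span_image (hg i i.2).1 fun hj' => (hDQ ▸ hj) hj'.1
    rw [map_sub, Finsupp.sub_apply, hgj, sub_zero, f.repr_self]
  let b := Module.Basis.basisOfCoords (v := fun i : DQ => ⟨f i - g i, (hg i i.2).2⟩) hcoords
    fun i hi => by simpa [hDQ, hDL] using hi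
  have hb : U.subtype ∘ b = fun i : DQ => f i - g i := by
    ext i
    simp [b]
  refine ⟨hb ▸ b.linearIndependent.map' _ U.ker_subtype, ?_, ?_⟩
  · rw [Set.image_eq_range, ← hb, Set.range_comp, ← Submodule.map_span, b.span_eq,
      Submodule.map_subtype_top]
  · rw [Module.finrank_eq_nat_card_basis b, Nat.card_coe_set_eq]

/-- Abstract form of Lemma `gamma.basis`:  the set `{f i − g i : i ∈ D_Q}` is a basis of the
subspace `U`; in particular `dim U = |D_Q|`. -/
theorem gamma_basis {k V ι : Type*} [Field k] [AddCommGroup V] [Module k V]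
    [Fintype ι] [LinearOrder ι]
    (f : Module.Basis ι k V) (U : Submodule k V)
    (DL DQ : Set ι)
    (hDL : DL = {i : ι | f i ∉ U ⊔ Submodule.span k (f '' {j : ι | j < i})})
    (hDQ : DQ = DLᶜ)
    (g : ι → V)
    (hg : ∀ i ∈ DQ, g i ∈ Submodule.span k (f '' {j : ι | j ∈ DL ∧ j < i}) ∧ f i - g i ∈ U) :
    LinearIndependent k (fun i : DQ => f i - g i) ∧
    Submodule.span k ((fun i : ι => f i - g i) '' DQ) = U ∧
    Module.finrank k U = DQ.ncard :=
  gamma_basis_general f U DL DQ hDL hDQ g hg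
end

section
/- The images {f_i + U : i ∈ D_L} form a basis of the quotient space V/U; in particular dim_k(V/U) = |D_L|. -/
/-!
For `i ∈ D_L` the class of `f i` in `V/U` is not in the span of the classes of the `f j`, `j < i`.
Such a family is linearly independent: in a vanishing combination, the largest index with a nonzero
coefficient would express its vector through smaller ones. Conversely, by well-founded induction
every `f i` lies in `U + span {f j : j ∈ D_L}`, because for `i ∉ D_L` it lies in
`U + span {f j : j < i}`.
-/

open Submodule

section

variable {K M ι : Type*} [DivisionRing K] [AddCommGroup M] [Module K M] [LinearOrder ι]

theorem linearIndependent_of_notMem_span_image_Iio {v : ι → M}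
    (hv : ∀ i, v i ∉ span K (v '' Set.Iio i)) : LinearIndependent K v := by
  classical
  rw [linearIndependent_iff']
  intro s
  induction s using Finset.induction_on_max with
  | empty => simp
  | insert a s hlt ih =>
    intro g hg
    rw [Finset.sum_insert fun ha => lt_irrefl a (hlt a ha)] at hg
    have hrest : ∑ j ∈ s, g j • v j ∈ span K (v '' Set.Iio a) :=
      sum_mem fun j hj => smul_mem _ _ (subset_span ⟨j, hlt j hj, rfl⟩)
    have hga : g a = 0 := by
      by_contra hne
      refine hv a ((smul_mem_iff _ hne).mp ?_)
      rw [eq_neg_of_add_eq_zero_left hg]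
      exact neg_mem hrest
    rw [hga, zero_smul, zero_add] at hg
    simpa [hga] using ih g hg

end

namespace Submodule

variable {k V ι : Type*} [DivisionRing k] [AddCommGroup V] [Module k V] [LinearOrder ι]
  (U : Submodule k V) {f : ι → V} {s : Set ι}

theorem linearIndependent_mkQ_of_notMem_sup_span_image_Iio
    (hs : ∀ i ∈ s, f i ∉ U ⊔ span k (f '' Set.Iio i)) :
    LinearIndependent k (fun i : s => U.mkQ (f i)) := by
  refine linearIndependent_of_notMem_span_image_Iio fun i hi => hs i i.2 ?_
  have hsub : (fun j : s => U.mkQ (f j)) '' Set.Iio i ⊆ U.mkQ '' (f '' Set.Iio (i : ι)) := by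
    rintro _ ⟨j, hj, rfl⟩
    exact ⟨f j, ⟨j, hj, rfl⟩, rfl⟩
  have hi' := span_mono (R := k) hsub hi
  rwa [span_image, ← mem_comap, comap_map_mkQ] at hi'

theorem span_range_le_sup_span_image [WellFoundedLT ι]
    (hs : ∀ i ∉ s, f i ∈ U ⊔ span k (f '' Set.Iio i)) :
    span k (Set.range f) ≤ U ⊔ span k (f '' s) := by
  rw [span_le]
  rintro _ ⟨i, rfl⟩
  induction i using WellFoundedLT.induction with
  | _ i ih =>
    by_cases hi : i ∈ s
    · exact mem_sup_right (subset_span ⟨i, hi, rfl⟩)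
    · have hle : span k (f '' Set.Iio i) ≤ U ⊔ span k (f '' s) := by
        rw [span_le]
        rintro _ ⟨j, hj, rfl⟩
        exact ih j hj
      exact sup_le le_sup_left hle (hs i hi)

end Submodule

theorem quotient_basis_general {k V ι : Type*} [Field k] [AddCommGroup V] [Module k V]
    [Fintype ι] [LinearOrder ι]
    (f : Module.Basis ι k V) (U : Submodule k V)
    (DL : Set ι)
    (hDL : DL = {i : ι | f i ∉ U ⊔ Submodule.span k (f '' {j : ι | j < i})}) :
    LinearIndependent k (fun i : DL => U.mkQ (f i)) ∧
    Submodule.span k (U.mkQ '' (f '' DL)) = ⊤ ∧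
    Module.finrank k (V ⧸ U) = DL.ncard := by
  have hmem (i : ι) : i ∈ DL ↔ f i ∉ U ⊔ span k (f '' Set.Iio i) := by rw [hDL]; rfl
  have hli : LinearIndependent k (fun i : DL => U.mkQ (f i)) :=
    U.linearIndependent_mkQ_of_notMem_sup_span_image_Iio fun i => (hmem i).mp
  have hspan : span k (U.mkQ '' (f '' DL)) = ⊤ := by
    rw [span_image, map_mkQ_eq_top, eq_top_iff, ← f.span_eq]
    exact U.span_range_le_sup_span_image fun i hi => not_not.mp ((hmem i).not.mp hi)
  have hspan_range : span k (Set.range fun i : DL => U.mkQ (f i)) = ⊤ := by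
    rwa [Set.image_image, Set.image_eq_range] at hspan
  refine ⟨hli, hspan, ?_⟩
  rw [Module.finrank_eq_nat_card_basis (Module.Basis.mk hli hspan_range.ge), Nat.card_coe_set_eq]

/-- The images `{f i + U : i ∈ D_L}` form a basis of the quotient space `V/U`;
in particular `dim (V/U) = |D_L|`. -/
theorem quotient_basis {k V ι : Type*} [Field k] [AddCommGroup V] [Module k V]
    [Fintype ι] [LinearOrder ι]
    (f : Module.Basis ι k V) (U : Submodule k V)
    (DL DQ : Set ι)
    (hDL : DL = {i : ι | f i ∉ U ⊔ Submodule.span k (f '' {j : ι | j < i})})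
    (hDQ : DQ = DLᶜ) :
    LinearIndependent k (fun i : DL => U.mkQ (f i)) ∧
    Submodule.span k (U.mkQ '' (f '' DL)) = ⊤ ∧
    Module.finrank k (V ⧸ U) = DL.ncard :=
  quotient_basis_general f U DL hDL
end

section
/- For every subset T ⊆ ι, the intersection U ∩ span_k{f_i : i ∈ T} is contained in span_k{f_i − g_i : i ∈ D_Q ∩ T}. (This is the abstract form of Lemma 'Sigma.top': taking T = {S : 1 ∈ S}, so that span{f_i : i ∈ T} contains the image of the weighted coboundary operator δ, one obtains im δ ∩ Q̄ ⊆ span{f_{{1}∪F} − g_{{1}∪F} : 1 ∉ F, {1}∪F ∈ Δ(Q)}.) -/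
/-!
Every `f i` with `i ∈ D_Q ∩ T` splits as `(f i - g i) + g i` with `g i ∈ span (f '' D_L)`, so
`span (f '' T) ≤ W ⊔ span (f '' D_L)` where `W = span {f i - g i : i ∈ D_Q ∩ T} ≤ U`.
Writing `x ∈ U ⊓ span (f '' T)` as `w + s` accordingly, `s = x - w` lies in `U ⊓ span (f '' D_L)`,
which is trivial: the leading index `M` of a nonzero vector of `U` satisfies
`f M ∈ U ⊔ span {f j : j < M}`, so `M ∉ D_L`.
-/

open Submodule Set

namespace Module.Basis

variable {ι k V : Type*} [LinearOrder ι] [Field k] [AddCommGroup V] [Module k V]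

theorem apply_max'_support_repr_mem_sup (f : Basis ι k V) {U : Submodule k V} {u : V}
    (hu : u ∈ U) (h : (f.repr u).support.Nonempty) :
    f ((f.repr u).support.max' h) ∈ U ⊔ span k (f '' Iio ((f.repr u).support.max' h)) := by
  classical
  set M := (f.repr u).support.max' h
  set c := f.repr u M
  have hc : c ≠ 0 := Finsupp.mem_support_iff.mp ((f.repr u).support.max'_mem h)
  have hlow : u - c • f M ∈ span k (f '' Iio M) := by
    have hrepr : f.repr (u - c • f M) = (f.repr u).erase M := by
      rw [map_sub, map_smul, repr_self, Finsupp.smul_single_one, sub_eq_iff_eq_add',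
        Finsupp.single_add_erase]
    rw [mem_span_image, hrepr, Finsupp.support_erase]
    exact fun j hj => Finset.lt_max'_of_mem_erase_max' _ h hj
  have hfM : f M = c⁻¹ • (u - (u - c • f M)) := by
    rw [sub_sub_cancel, smul_smul, inv_mul_cancel₀ hc, one_smul]
  rw [hfM]
  exact smul_mem _ _ (sub_mem (mem_sup_left hu) (mem_sup_right hlow))

theorem inf_span_image_eq_bot (f : Basis ι k V) {U : Submodule k V} {S : Set ι}
    (hS : ∀ i ∈ S, f i ∉ U ⊔ span k (f '' Iio i)) : U ⊓ span k (f '' S) = ⊥ := by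
  refine eq_bot_iff.mpr fun u ⟨hu, huS⟩ => (mem_bot k).mpr ?_
  by_contra hne
  have h : (f.repr u).support.Nonempty := by
    rwa [Finsupp.support_nonempty_iff, ne_eq, LinearEquiv.map_eq_zero_iff]
  exact hS _ (f.mem_span_image.mp huS ((f.repr u).support.max'_mem h))
    (f.apply_max'_support_repr_mem_sup hu h)

end Module.Basis

theorem span_image_le_span_image_sub_sup {ι R V : Type*} [Ring R] [AddCommGroup V] [Module R V]
    (f g : ι → V) {S : Set ι} (hg : ∀ i ∉ S, g i ∈ span R (f '' S)) (T : Set ι) :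
    span R (f '' T) ≤ span R ((fun i => f i - g i) '' (Sᶜ ∩ T)) ⊔ span R (f '' S) := by
  refine span_le.mpr <| image_subset_iff.mpr fun i hi => ?_
  by_cases hiS : i ∈ S
  · exact mem_sup_right (subset_span (mem_image_of_mem f hiS))
  · rw [mem_preimage, SetLike.mem_coe, ← sub_add_cancel (f i) (g i)]
    exact add_mem (mem_sup_left (subset_span ⟨i, ⟨hiS, hi⟩, rfl⟩)) (mem_sup_right (hg i hiS))

theorem sigma_top_general {k V ι : Type*} [Field k] [AddCommGroup V] [Module k V]
    [LinearOrder ι]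
    (f : Module.Basis ι k V) (U : Submodule k V)
    (DL DQ : Set ι)
    (hDL : DL = {i : ι | f i ∉ U ⊔ Submodule.span k (f '' {j : ι | j < i})})
    (hDQ : DQ = DLᶜ)
    (g : ι → V)
    (hg : ∀ i ∈ DQ, g i ∈ Submodule.span k (f '' {j : ι | j ∈ DL ∧ j < i}) ∧ f i - g i ∈ U) :
    ∀ T : Set ι,
      U ⊓ Submodule.span k (f '' T) ≤
        Submodule.span k ((fun i : ι => f i - g i) '' (DQ ∩ T)) := by
  subst hDQ
  intro T x ⟨hxU, hxT⟩
  have hDL_indep : U ⊓ span k (f '' DL) = ⊥ :=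
    f.inf_span_image_eq_bot fun i hi => by rw [hDL] at hi; exact hi
  have hgDL : ∀ i ∉ DL, g i ∈ span k (f '' DL) := fun i hi =>
    span_mono (image_mono fun _ hj => hj.1) (hg i hi).1
  have hWU : span k ((fun i => f i - g i) '' (DLᶜ ∩ T)) ≤ U :=
    span_le.mpr <| image_subset_iff.mpr fun i hi => (hg i hi.1).2
  obtain ⟨w, hw, s, hs, rfl⟩ :=
    mem_sup.mp (span_image_le_span_image_sub_sup (R := k) f g hgDL T hxT)
  have hs0 : s = 0 := by
    rw [← mem_bot k, ← hDL_indep]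
    exact ⟨(add_mem_cancel_left (hWU hw)).mp hxU, hs⟩
  rwa [hs0, add_zero]

/-- Abstract form of Lemma `Sigma.top`:  for every subset `T ⊆ ι`, the intersection
`U ∩ span {f i : i ∈ T}` is contained in `span {f i − g i : i ∈ D_Q ∩ T}`. -/
theorem sigma_top {k V ι : Type*} [Field k] [AddCommGroup V] [Module k V]
    [Fintype ι] [LinearOrder ι]
    (f : Module.Basis ι k V) (U : Submodule k V)
    (DL DQ : Set ι)
    (hDL : DL = {i : ι | f i ∉ U ⊔ Submodule.span k (f '' {j : ι | j < i})})
    (hDQ : DQ = DLᶜ)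
    (g : ι → V)
    (hg : ∀ i ∈ DQ, g i ∈ Submodule.span k (f '' {j : ι | j ∈ DL ∧ j < i}) ∧ f i - g i ∈ U) :
    ∀ T : Set ι,
      U ⊓ Submodule.span k (f '' T) ≤
        Submodule.span k ((fun i : ι => f i - g i) '' (DQ ∩ T)) :=
  sigma_top_general f U DL DQ hDL hDQ g hg
end

section
/- Suppose δ : V → V is a k-linear map such that δ(f_S) = 0 for every S ∈ D with 1 ∈ S, and δ(f_S) = f_{S∪{1}} for every S ∈ D with 1 ∉ S and S∪{1} ∈ D; suppose moreover that for every G ∈ D_L with 1 ∉ G one has G∪{1} ∈ D. Then the vectors δ(f_F − g_F), for F ∈ D_Q with 1 ∉ F and F∪{1} ∈ D_Q, are linearly independent over k; consequently the subspace U' = span_k{f_F − g_F : F ∈ D_Q, 1 ∉ F, F∪{1} ∈ D_Q} of U satisfies dim_k δ(U') = |{F ∈ D_Q : 1 ∉ F, F∪{1} ∈ D_Q}|. (This is the abstract form of Lemma 'Sigma.bottom': there is a subspace Q̄' of Q̄ with dim δ(Q̄') = |{F ∈ Δ(Q) : 1 ∉ F, {1}∪F ∈ Δ(Q)}|.) 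-/
/-- The lexicographic order on finite sets of positive integers:  writing
`S = {s₁ < s₂ < …}` and `T = {t₁ < t₂ < …}`, we have `S <_L T` iff there is an index `q`
with `s_q < t_q` and `s_p = t_p` for all `p < q`. -/
def lexLt (S T : Finset ℕ) : Prop :=
  ∃ q : ℕ, ∃ (h1 : q < (S.sort (· ≤ ·)).length) (h2 : q < (T.sort (· ≤ ·)).length),
    (S.sort (· ≤ ·))[q] < (T.sort (· ≤ ·))[q] ∧
      ∀ p : ℕ, ∀ hp : p < q,
        (S.sort (· ≤ ·))[p]'(Nat.lt_trans hp h1) = (T.sort (· ≤ ·))[p]'(Nat.lt_trans hp h2)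

/-!
Write `A` for the set of `G ∪ {1}` with `G ∈ D_L`, `1 ∉ G`. Since `g_F` is a combination of
`f_G` with `G ∈ D_L`, the vector `δ g_F` lies in the span of the `f_H`, `H ∈ A`, whereas
`δ f_F = f_{F ∪ {1}}` with `F ∪ {1} ∉ A`, because `F ∉ D_L`. Killing the basis vectors indexed
by `A` therefore sends the vectors `δ(f_F − g_F)` to the distinct basis vectors `f_{F ∪ {1}}`.
-/

open Module Submodule

theorem Module.Basis.linearIndependent_of_sub_mem_span_image {ι κ R M : Type*} [Ring R]
    [AddCommGroup M] [Module R M] (b : Basis ι R M) {A : Set ι} {v : κ → M} {φ : κ → ι}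
    (hφ : Function.Injective φ) (hφA : ∀ j, φ j ∉ A)
    (hv : ∀ j, v j - b (φ j) ∈ span R (b '' A)) :
    LinearIndependent R v := by
  classical
  -- `constr ℕ` yields an `R`-linear map without `R` being commutative.
  let P : M →ₗ[R] M := b.constr ℕ fun i => if i ∈ A then 0 else b i
  have hP : ∀ i, P (b i) = if i ∈ A then 0 else b i := b.constr_basis ℕ _
  have hPA : span R (b '' A) ≤ LinearMap.ker P := by
    rw [span_le]
    rintro _ ⟨i, hi, rfl⟩
    simp [hP, hi]
  have hPv : P ∘ v = b ∘ φ := by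
    ext j
    have := LinearMap.mem_ker.mp (hPA (hv j))
    rwa [map_sub, hP, if_neg (hφA j), sub_eq_zero] at this
  apply LinearIndependent.of_comp P
  rw [hPv]
  exact b.linearIndependent.comp φ hφ

theorem finrank_span_image_eq_ncard {ι R M : Type*} [Ring R] [StrongRankCondition R]
    [AddCommGroup M] [Module R M] {w : ι → M} {s : Set ι} [Finite s]
    (hw : LinearIndependent R (fun i : s => w i)) :
    finrank R (span R (w '' s)) = s.ncard := by
  have := Fintype.ofFinite s
  have := nontrivial_of_invariantBasisNumber R
  rw [Set.image_eq_range, finrank_span_eq_card hw, Set.ncard_eq_toFinset_card',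
    Set.toFinset_card]

theorem map_span_le_span_image_insert {α R M : Type*} [DecidableEq α] [Semiring R]
    [AddCommMonoid M] [Module R M] {D : Finset (Finset α)} (a : α) (b : D → M)
    (δ : M →ₗ[R] M) (hδmem : ∀ S : D, a ∈ S.1 → δ (b S) = 0)
    (hδins : ∀ S : D, a ∉ S.1 → ∀ h : insert a S.1 ∈ D, δ (b S) = b ⟨insert a S.1, h⟩)
    {s : Set D} (hs : ∀ G ∈ s, a ∉ G.1 → insert a G.1 ∈ D) :
    map δ (span R (b '' s)) ≤
      span R (b '' {H | ∃ G ∈ s, a ∉ G.1 ∧ H.1 = insert a G.1}) := by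
  rw [map_span_le]
  rintro _ ⟨G, hG, rfl⟩
  by_cases haG : a ∈ G.1
  · rw [hδmem G haG]
    exact zero_mem _
  · rw [hδins G haG (hs G hG haG)]
    exact subset_span ⟨_, ⟨G, hG, haG, rfl⟩, rfl⟩

theorem sigma_bottom_general {k V : Type*} [Field k] [AddCommGroup V] [Module k V]
    (D : Finset (Finset ℕ))
    (f : Module.Basis ↥D k V) (U : Submodule k V)
    (DL DQ : Set ↥D)
    (hDQ : DQ = DLᶜ)
    (g : ↥D → V)
    (hg : ∀ F ∈ DQ, g F ∈ Submodule.span k (f '' {G : ↥D | G ∈ DL ∧ lexLt G.1 F.1}) ∧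
      f F - g F ∈ U)
    (δ : V →ₗ[k] V)
    (hδone : ∀ S : ↥D, 1 ∈ S.1 → δ (f S) = 0)
    (hδins : ∀ S : ↥D, 1 ∉ S.1 → ∀ h : insert 1 S.1 ∈ D, δ (f S) = f ⟨insert 1 S.1, h⟩)
    (hDLins : ∀ G : ↥D, G ∈ DL → 1 ∉ G.1 → insert 1 G.1 ∈ D)
    (S4 : Set ↥D)
    (hS4 : S4 = {F : ↥D | F ∈ DQ ∧ 1 ∉ F.1 ∧
      ∃ h : insert 1 F.1 ∈ D, (⟨insert 1 F.1, h⟩ : ↥D) ∈ DQ}) :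
    LinearIndependent k (fun F : S4 => δ (f F.1 - g F.1)) ∧
    Submodule.span k ((fun F : ↥D => f F - g F) '' S4) ≤ U ∧
    Module.finrank k
        (Submodule.map δ (Submodule.span k ((fun F : ↥D => f F - g F) '' S4))) =
      S4.ncard := by
  subst hDQ
  have hS4mem (F : S4) : F.1 ∈ DLᶜ ∧ 1 ∉ F.1.1 ∧
      ∃ h : insert 1 F.1.1 ∈ D, (⟨insert 1 F.1.1, h⟩ : D) ∈ DLᶜ := hS4 ▸ F.2
  set A : Set D := {H | ∃ G ∈ DL, 1 ∉ G.1 ∧ H.1 = insert 1 G.1}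
  have hδg (F : D) (hF : F ∈ DLᶜ) : δ (g F) ∈ span k (f '' A) :=
    map_span_le_span_image_insert 1 f δ hδone hδins hDLins
      (mem_map_of_mem (span_mono (Set.image_mono fun G hG => hG.1) (hg F hF).1))
  let φ (F : S4) : D := ⟨insert 1 F.1.1, (hS4mem F).2.2.choose⟩
  have hφ : Function.Injective φ := fun F F' h =>
    Subtype.ext <| Subtype.ext <|
      Finset.insert_erase_invOn.2.injOn (hS4mem F).2.1 (hS4mem F').2.1 (congrArg Subtype.val h)
  have hφA (F : S4) : φ F ∉ A := by
    rintro ⟨G, hG, hG1, hFG⟩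
    have hFG : F.1 = G := Subtype.ext (Finset.insert_erase_invOn.2.injOn (hS4mem F).2.1 hG1 hFG)
    exact (hS4mem F).1 (hFG ▸ hG)
  have hli : LinearIndependent k (fun F : S4 => δ (f F.1 - g F.1)) :=
    f.linearIndependent_of_sub_mem_span_image hφ hφA fun F => by
      rw [map_sub, hδins _ (hS4mem F).2.1 (hS4mem F).2.2.choose, sub_sub_cancel_left]
      exact neg_mem (hδg _ (hS4mem F).1)
  refine ⟨hli, span_le.mpr ?_, ?_⟩
  · rintro _ ⟨F, hF, rfl⟩
    exact (hg F (hS4mem ⟨F, hF⟩).1).2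
  · rw [map_span, ← Set.image_comp]
    exact finrank_span_image_eq_ncard hli

/-- Abstract form of Lemma `Sigma.bottom`:  the vectors `δ(f_F − g_F)`, for `F ∈ D_Q` with
`1 ∉ F` and `F ∪ {1} ∈ D_Q`, are linearly independent, so the subspace
`U' = span {f_F − g_F : F ∈ D_Q, 1 ∉ F, F ∪ {1} ∈ D_Q}` of `U` satisfies
`dim δ(U') = |{F ∈ D_Q : 1 ∉ F, F ∪ {1} ∈ D_Q}|`. -/
theorem sigma_bottom {k V : Type*} [Field k] [AddCommGroup V] [Module k V]
    (D : Finset (Finset ℕ)) (hpos : ∀ S ∈ D, 0 ∉ S)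
    (f : Module.Basis ↥D k V) (U : Submodule k V)
    (DL DQ : Set ↥D)
    (hDL : DL = {S : ↥D | f S ∉ U ⊔ Submodule.span k (f '' {R : ↥D | lexLt R.1 S.1})})
    (hDQ : DQ = DLᶜ)
    (g : ↥D → V)
    (hg : ∀ F ∈ DQ, g F ∈ Submodule.span k (f '' {G : ↥D | G ∈ DL ∧ lexLt G.1 F.1}) ∧
      f F - g F ∈ U)
    (δ : V →ₗ[k] V)
    (hδone : ∀ S : ↥D, 1 ∈ S.1 → δ (f S) = 0)
    (hδins : ∀ S : ↥D, 1 ∉ S.1 → ∀ h : insert 1 S.1 ∈ D, δ (f S) = f ⟨insert 1 S.1, h⟩)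
    (hDLins : ∀ G : ↥D, G ∈ DL → 1 ∉ G.1 → insert 1 G.1 ∈ D)
    (S4 : Set ↥D)
    (hS4 : S4 = {F : ↥D | F ∈ DQ ∧ 1 ∉ F.1 ∧
      ∃ h : insert 1 F.1 ∈ D, (⟨insert 1 F.1, h⟩ : ↥D) ∈ DQ}) :
    LinearIndependent k (fun F : S4 => δ (f F.1 - g F.1)) ∧
    Submodule.span k ((fun F : ↥D => f F - g F) '' S4) ≤ U ∧
    Module.finrank k
        (Submodule.map δ (Submodule.span k ((fun F : ↥D => f F - g F) '' S4))) =
      S4.ncard :=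
  sigma_bottom_general D f U DL DQ hDQ g hg δ hδone hδins hDLins S4 hS4
end

section
/- If Δ is a near-cone with apex v₀, then every F ∈ B(Δ) is a maximal face of Δ (i.e., no face of Δ strictly contains F); consequently B(Δ) is an antichain under inclusion. -/
/-- If `Δ` is a near-cone with apex `v₀`, then every `F ∈ B(Δ) = {F ∈ Δ : F ∪ {v₀} ∉ Δ}`
is a maximal face of `Δ`; consequently `B(Δ)` is an antichain under inclusion. -/
theorem nearCone_B_maximal (Δ : Finset (Finset ℕ)) (v₀ : ℕ)
    (hpos : ∀ F ∈ Δ, 0 ∉ F) (hv₀ : 0 < v₀)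
    (hcomplex : ∀ F ∈ Δ, ∀ G ⊆ F, G ∈ Δ)
    (hnc : ∀ F ∈ Δ, v₀ ∉ F → ∀ w ∈ F, insert v₀ (F.erase w) ∈ Δ) :
    (∀ F ∈ Δ, insert v₀ F ∉ Δ → ∀ G ∈ Δ, ¬ F ⊂ G) ∧
    IsAntichain (· ⊆ ·) {F : Finset ℕ | F ∈ Δ ∧ insert v₀ F ∉ Δ} := by
  have hmax : ∀ F ∈ Δ, insert v₀ F ∉ Δ → ∀ G ∈ Δ, ¬ F ⊂ G := by
    intro F hF hFB G hG hFG
    have hsub := hFG.1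
    obtain ⟨w, hwG, hwF⟩ := (Finset.ssubset_iff_of_subset hsub).mp hFG
    by_cases hv : v₀ ∈ G
    · exact hFB (hcomplex G hG _ (Finset.insert_subset hv hsub))
    · have hH : insert w F ∈ Δ := hcomplex G hG _ (Finset.insert_subset hwG hsub)
      have hvH : v₀ ∉ insert w F := by
        simp only [Finset.mem_insert, not_or]
        exact ⟨fun h => hv (h ▸ hwG), fun h => hv (hsub h)⟩
      have := hnc _ hH hvH w (Finset.mem_insert_self w F)
      rw [Finset.erase_insert hwF] at this; exact hFB this
  refine ⟨hmax, ?_⟩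
  intro F hF G hG hne hsub
  exact hmax F hF.1 hF.2 G hG.1 (Finset.ssubset_iff_subset_ne.mpr ⟨hsub, hne⟩)
end
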